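/- Let L be Liouville's constant L = Σ_{n≥1} 10^{−n!} and α = (1, L). Define f_N(x,y) = sin(10^{N!}(Σ_{n=1}^{N} x·10^{−n!} − y)). Then for N ≥ 3: ‖f_N‖²_{L²(𝕋²)} = 2π², ‖∇f_N‖_{L²(𝕋²)} ≤ 6·10^{N!}, and ‖⟨∇f_N, α⟩‖_{L²(𝕋²)} = √(2π²)·Σ_{n=N+1}^∞ 10^{N!−n!} ≤ 10^{−2·N!}·√(2π²)·2. Consequently the inequality ‖∇f‖·‖⟨∇f,α⟩‖ ≥ c‖f‖² fails for α = (1, L) for every c > 0. -/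

import Mathlib

open Real

/- We model a mean-zero function `f ∈ H¹(𝕋²)` on the flat torus `𝕋² = ℝ²/(2πℤ)²`
by its Fourier coefficients `a : ℤ × ℤ → ℂ`, `f = Σ aₖ e^{ik·x}`, `a₀ = 0`.
By Parseval, `‖f‖²_{L²} = (2π)² Σ |aₖ|²`, `‖∇f‖²_{L²} = (2π)² Σ |k|²|aₖ|²` and
`‖⟨∇f,α⟩‖²_{L²} = (2π)² Σ ⟨k,α⟩²|aₖ|²`.  All inequalities below are homogeneous
in the number of `L²`-norm factors, so the constant `(2π)²` is harmlessly dropped. -/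

/-- `‖f‖²_{L²(𝕋²)}` (modulo the factor `(2π)²`). -/
noncomputable def normSq (a : ℤ × ℤ → ℂ) : ℝ := ∑' k : ℤ × ℤ, ‖a k‖ ^ 2

/-- `‖∇f‖²_{L²(𝕋²)}` (modulo the factor `(2π)²`). -/
noncomputable def gradSq (a : ℤ × ℤ → ℂ) : ℝ :=
  ∑' k : ℤ × ℤ, (((k.1 : ℝ)) ^ 2 + ((k.2 : ℝ)) ^ 2) * ‖a k‖ ^ 2

/-- `‖⟨∇f, α⟩‖²_{L²(𝕋²)}` (modulo the factor `(2π)²`). -/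
noncomputable def dirSq (α : ℝ × ℝ) (a : ℤ × ℤ → ℂ) : ℝ :=
  ∑' k : ℤ × ℤ, (α.1 * k.1 + α.2 * k.2) ^ 2 * ‖a k‖ ^ 2

/-- `f ∈ H¹(𝕋²)`. -/
def IsH1 (a : ℤ × ℤ → ℂ) : Prop :=
  Summable (fun k : ℤ × ℤ => ‖a k‖ ^ 2) ∧
  Summable (fun k : ℤ × ℤ => (((k.1 : ℝ)) ^ 2 + ((k.2 : ℝ)) ^ 2) * ‖a k‖ ^ 2)

/-- `‖f‖²_{L²(𝕋²)}` with the Parseval constant `(2π)²` included. -/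
noncomputable def normSq' (a : ℤ × ℤ → ℂ) : ℝ := (2 * π) ^ 2 * normSq a

/-- `‖∇f‖²_{L²(𝕋²)}` with the Parseval constant `(2π)²` included. -/
noncomputable def gradSq' (a : ℤ × ℤ → ℂ) : ℝ := (2 * π) ^ 2 * gradSq a

/-- `‖⟨∇f,α⟩‖²_{L²(𝕋²)}` with the Parseval constant `(2π)²` included. -/
noncomputable def dirSq' (α : ℝ × ℝ) (a : ℤ × ℤ → ℂ) : ℝ := (2 * π) ^ 2 * dirSq α a

/-- Liouville's constant `L = Σ_{n≥1} 10^{-n!}`. -/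
noncomputable def liouville : ℝ := ∑' n : ℕ, ((10 : ℝ) ^ (n + 1).factorial)⁻¹

/-- Fourier coefficients of
`f_N(x,y) = sin(10^{N!}(Σ_{n=1}^N x 10^{-n!} - y)) = sin(K_N x - 10^{N!} y)`,
where `K_N = Σ_{n=1}^N 10^{N!-n!} ∈ ℤ`: mass `±1/(2i)` at `±(K_N, -10^{N!})`. -/
noncomputable def liouvilleCoeff (N : ℕ) : ℤ × ℤ → ℂ := fun m =>
  if m = ((∑ n ∈ Finset.Icc 1 N, (10 : ℤ) ^ (N.factorial - n.factorial)),
      -((10 : ℤ) ^ N.factorial)) then (2 * Complex.I)⁻¹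
  else if m = (-(∑ n ∈ Finset.Icc 1 N, (10 : ℤ) ^ (N.factorial - n.factorial)),
      (10 : ℤ) ^ N.factorial) then -(2 * Complex.I)⁻¹
  else 0

/-!
`f_N` has exactly the two Fourier modes `±(K_N, -10^{N!})` with
`K_N = 10^{N!} Σ_{n ≤ N} 10^{-n!}`, so all three norms are explicit. Along `α = (1, L)` the
frequency pairs to `K_N - 10^{N!} L = -10^{N!} Σ_{n > N} 10^{-n!}`, which the fast decay of
Liouville's series makes smaller than `10^{-2 N!}`, whereas `‖∇f_N‖ ≈ 10^{N!}`. Hence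
`‖∇f_N‖ ‖⟨∇f_N, α⟩‖ = O(10^{-N!})` while `‖f_N‖² = 2π²`.
-/
open Filter LiouvilleNumber

section TwoPointSupport

variable {ι E : Type*} [NormedAddCommGroup E] {a : ι → E} {p q : ι}

theorem hasSum_mul_norm_sq_of_eq_zero_of_ne (hpq : p ≠ q)
    (ha : ∀ k, k ≠ p → k ≠ q → a k = 0) (w : ι → ℝ) :
    HasSum (fun k => w k * ‖a k‖ ^ 2) (w p * ‖a p‖ ^ 2 + w q * ‖a q‖ ^ 2) := by
  classical
  have hsum : HasSum (fun k => w k * ‖a k‖ ^ 2) (∑ k ∈ {p, q}, w k * ‖a k‖ ^ 2) :=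
    hasSum_sum_of_ne_finset_zero fun k hk => by
      simp only [Finset.mem_insert, Finset.mem_singleton, not_or] at hk
      simp [ha k hk.1 hk.2]
  rwa [Finset.sum_pair hpq] at hsum

end TwoPointSupport

def liouvilleFreq (N : ℕ) : ℤ × ℤ :=
  (∑ n ∈ Finset.Icc 1 N, (10 : ℤ) ^ (N.factorial - n.factorial), -(10 : ℤ) ^ N.factorial)

theorem liouvilleCoeff_apply (N : ℕ) (m : ℤ × ℤ) :
    liouvilleCoeff N m = if m = liouvilleFreq N then (2 * Complex.I)⁻¹
      else if m = -liouvilleFreq N then -(2 * Complex.I)⁻¹ else 0 := by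
  simp [liouvilleCoeff, liouvilleFreq]

theorem liouvilleFreq_snd (N : ℕ) : (liouvilleFreq N).2 = -10 ^ N.factorial := rfl

theorem liouvilleFreq_snd_neg (N : ℕ) : (liouvilleFreq N).2 < 0 := by
  rw [liouvilleFreq_snd, Left.neg_neg_iff]
  positivity

theorem liouvilleFreq_ne_neg (N : ℕ) : liouvilleFreq N ≠ -liouvilleFreq N := fun h => by
  have := congrArg Prod.snd h
  have := liouvilleFreq_snd_neg N
  simp only [Prod.snd_neg] at *
  omega

theorem liouvilleCoeff_eq_zero {N : ℕ} {m : ℤ × ℤ} (hp : m ≠ liouvilleFreq N)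
    (hq : m ≠ -liouvilleFreq N) : liouvilleCoeff N m = 0 := by
  rw [liouvilleCoeff_apply, if_neg hp, if_neg hq]

theorem liouvilleCoeff_zero (N : ℕ) : liouvilleCoeff N 0 = 0 := by
  have := liouvilleFreq_snd_neg N
  refine liouvilleCoeff_eq_zero (fun h => ?_) (fun h => ?_) <;>
    · have := congrArg Prod.snd h
      simp only [Prod.snd_zero, Prod.snd_neg] at this
      omega

theorem norm_liouvilleCoeff_freq (N : ℕ) : ‖liouvilleCoeff N (liouvilleFreq N)‖ = 1 / 2 := by
  simp [liouvilleCoeff_apply]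

theorem norm_liouvilleCoeff_neg_freq (N : ℕ) :
    ‖liouvilleCoeff N (-liouvilleFreq N)‖ = 1 / 2 := by
  simp [liouvilleCoeff_apply, (liouvilleFreq_ne_neg N).symm]

theorem hasSum_mul_norm_sq_liouvilleCoeff (N : ℕ) {w : ℤ × ℤ → ℝ}
    (hw : w (-liouvilleFreq N) = w (liouvilleFreq N)) :
    HasSum (fun k => w k * ‖liouvilleCoeff N k‖ ^ 2) (w (liouvilleFreq N) / 2) := by
  convert hasSum_mul_norm_sq_of_eq_zero_of_ne (liouvilleFreq_ne_neg N)
    (fun _ => liouvilleCoeff_eq_zero) w using 1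
  rw [hw, norm_liouvilleCoeff_freq, norm_liouvilleCoeff_neg_freq]
  ring

theorem isH1_liouvilleCoeff (N : ℕ) : IsH1 (liouvilleCoeff N) :=
  ⟨by simpa using (hasSum_mul_norm_sq_liouvilleCoeff N (w := 1) rfl).summable,
    (hasSum_mul_norm_sq_liouvilleCoeff N (by simp)).summable⟩

theorem normSq_liouvilleCoeff (N : ℕ) : normSq (liouvilleCoeff N) = 1 / 2 := by
  simpa [normSq] using (hasSum_mul_norm_sq_liouvilleCoeff N (w := 1) rfl).tsum_eq

theorem gradSq_liouvilleCoeff (N : ℕ) :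
    gradSq (liouvilleCoeff N) =
      (((liouvilleFreq N).1 : ℝ) ^ 2 + ((liouvilleFreq N).2 : ℝ) ^ 2) / 2 :=
  (hasSum_mul_norm_sq_liouvilleCoeff N (by simp)).tsum_eq

theorem dirSq_liouvilleCoeff (α : ℝ × ℝ) (N : ℕ) :
    dirSq α (liouvilleCoeff N) =
      (α.1 * (liouvilleFreq N).1 + α.2 * (liouvilleFreq N).2) ^ 2 / 2 :=
  (hasSum_mul_norm_sq_liouvilleCoeff N (by simp; ring)).tsum_eq

theorem liouville_eq_sum_add_remainder (N : ℕ) :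
    liouville =
      ∑ i ∈ Finset.range N, ((10 : ℝ) ^ (i + 1).factorial)⁻¹ + remainder 10 N := by
  have hsum : Summable fun i : ℕ => ((10 : ℝ) ^ (i + 1).factorial)⁻¹ := by
    simpa using remainder_summable (m := 10) (by norm_num) 0
  rw [liouville, ← hsum.sum_add_tsum_nat_add N, remainder]
  simp only [one_div, add_assoc]

theorem liouville_lt : liouville < 1 / 9 := by
  have h := remainder_lt' 0 (m := 10) (by norm_num)
  rw [liouville_eq_sum_add_remainder 0]
  norm_num at h ⊢
  linarith

theorem liouvilleFreq_fst_cast (N : ℕ) :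
    ((liouvilleFreq N).1 : ℝ) =
      10 ^ N.factorial * ∑ i ∈ Finset.range N, ((10 : ℝ) ^ (i + 1).factorial)⁻¹ := by
  rw [liouvilleFreq, Finset.mul_sum, ← Finset.Ico_add_one_right_eq_Icc,
    Finset.sum_Ico_eq_sum_range, Nat.add_sub_cancel]
  push_cast
  refine Finset.sum_congr rfl fun i hi => ?_
  rw [Finset.mem_range] at hi
  rw [add_comm 1, pow_sub₀ _ (by norm_num) (Nat.factorial_le (by omega))]

theorem liouville_mul_sub_liouvilleFreq_fst (N : ℕ) :
    liouville * 10 ^ N.factorial - (liouvilleFreq N).1 = 10 ^ N.factorial * remainder 10 N := by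
  rw [liouvilleFreq_fst_cast, liouville_eq_sum_add_remainder N]
  ring

theorem liouvilleFreq_fst_le (N : ℕ) : ((liouvilleFreq N).1 : ℝ) ≤ 10 ^ N.factorial / 9 := by
  have h := liouville_mul_sub_liouvilleFreq_fst N
  have := remainder_pos (m := 10) (by norm_num) N
  have := liouville_lt
  have : (0 : ℝ) < 10 ^ N.factorial := by positivity
  nlinarith

theorem pow_factorial_mul_remainder_lt {m : ℝ} (hm : 2 ≤ m) {N : ℕ} (hN : 3 ≤ N) :
    m ^ N.factorial * remainder m N < (m ^ (2 * N.factorial))⁻¹ := by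
  set M := m ^ N.factorial
  have hM : 1 ≤ M := one_le_pow₀ (by linarith)
  calc M * remainder m N < M * (1 / M ^ N) :=
        mul_lt_mul_of_pos_left (remainder_lt N hm) (by positivity)
    _ = (M ^ (N - 1))⁻¹ := by
        rw [← Nat.sub_add_cancel (by omega : 1 ≤ N), pow_succ]
        field_simp
        simp
    _ ≤ (M ^ 2)⁻¹ := inv_anti₀ (by positivity) (pow_le_pow_right₀ hM (by omega))
    _ = (m ^ (2 * N.factorial))⁻¹ := by rw [← pow_mul, mul_comm]

theorem tsum_pow_factorial_mul_inv_eq (m : ℝ) (N : ℕ) :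
    ∑' n : ℕ, m ^ N.factorial * (m ^ (N + 1 + n).factorial)⁻¹ =
      m ^ N.factorial * remainder m N := by
  rw [tsum_mul_left, remainder]
  simp only [one_div, add_comm (N + 1)]

theorem normSq'_liouvilleCoeff (N : ℕ) : normSq' (liouvilleCoeff N) = 2 * π ^ 2 := by
  rw [normSq', normSq_liouvilleCoeff]
  ring

theorem sqrt_gradSq'_liouvilleCoeff_le (N : ℕ) :
    √(gradSq' (liouvilleCoeff N)) ≤ 6 * 10 ^ N.factorial := by
  have hK := liouvilleFreq_fst_le N
  have hK₀ : (0 : ℝ) ≤ (liouvilleFreq N).1 := by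
    rw [liouvilleFreq_fst_cast]
    positivity
  set K : ℝ := ((liouvilleFreq N).1 : ℝ)
  set M : ℝ := 10 ^ N.factorial
  have hK2 : K ^ 2 ≤ M ^ 2 / 81 := by nlinarith
  have hpi2 : π ^ 2 < 10 := by nlinarith [pi_lt_d2, pi_pos]
  have hgrad : gradSq' (liouvilleCoeff N) = 2 * π ^ 2 * (K ^ 2 + M ^ 2) := by
    rw [gradSq', gradSq_liouvilleCoeff, liouvilleFreq_snd]
    push_cast
    ring
  refine sqrt_le_iff.mpr ⟨by positivity, ?_⟩
  calc gradSq' (liouvilleCoeff N) = 2 * π ^ 2 * (K ^ 2 + M ^ 2) := hgrad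
    _ ≤ 2 * 10 * (M ^ 2 / 81 + M ^ 2) := by gcongr
    _ ≤ (6 * M) ^ 2 := by nlinarith

theorem sqrt_dirSq'_liouvilleCoeff (N : ℕ) :
    √(dirSq' (1, liouville) (liouvilleCoeff N)) =
      √(2 * π ^ 2) * (10 ^ N.factorial * remainder 10 N) := by
  have hdir : dirSq' (1, liouville) (liouvilleCoeff N) =
      2 * π ^ 2 * (10 ^ N.factorial * remainder 10 N) ^ 2 := by
    rw [dirSq', dirSq_liouvilleCoeff, ← liouville_mul_sub_liouvilleFreq_fst, liouvilleFreq_snd]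
    push_cast
    ring
  have hrem := remainder_pos (m := 10) (by norm_num) N
  rw [hdir, sqrt_mul (by positivity), sqrt_sq (by positivity)]

theorem sqrt_dirSq'_liouvilleCoeff_lt {N : ℕ} (hN : 3 ≤ N) :
    √(dirSq' (1, liouville) (liouvilleCoeff N)) <
      (10 ^ (2 * N.factorial))⁻¹ * √(2 * π ^ 2) := by
  rw [sqrt_dirSq'_liouvilleCoeff, mul_comm _ √_]
  exact mul_lt_mul_of_pos_left (pow_factorial_mul_remainder_lt (by norm_num) hN) (by positivity)

theorem sqrt_gradSq'_mul_sqrt_dirSq'_liouvilleCoeff_lt {N : ℕ} (hN : 3 ≤ N) :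
    √(gradSq' (liouvilleCoeff N)) * √(dirSq' (1, liouville) (liouvilleCoeff N)) <
      6 * √(2 * π ^ 2) / 10 ^ N.factorial := by
  calc _ < 6 * 10 ^ N.factorial * ((10 ^ (2 * N.factorial))⁻¹ * √(2 * π ^ 2)) :=
        mul_lt_mul' (sqrt_gradSq'_liouvilleCoeff_le N) (sqrt_dirSq'_liouvilleCoeff_lt hN)
          (sqrt_nonneg _) (by positivity)
    _ = 6 * √(2 * π ^ 2) / 10 ^ N.factorial := by
        rw [pow_mul']
        field_simp

theorem tendsto_ten_pow_factorial : Tendsto (fun N : ℕ => (10 : ℝ) ^ N.factorial) atTop atTop :=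
  (tendsto_pow_atTop_atTop_of_one_lt (by norm_num)).comp factorial_tendsto_atTop

theorem stmt_9 :
    (∀ N : ℕ, 3 ≤ N →
      normSq' (liouvilleCoeff N) = 2 * π ^ 2 ∧
      Real.sqrt (gradSq' (liouvilleCoeff N)) ≤ 6 * (10 : ℝ) ^ N.factorial ∧
      Real.sqrt (dirSq' (1, liouville) (liouvilleCoeff N))
        = Real.sqrt (2 * π ^ 2) *
            ∑' n : ℕ, (10 : ℝ) ^ N.factorial * ((10 : ℝ) ^ (N + 1 + n).factorial)⁻¹ ∧
      Real.sqrt (dirSq' (1, liouville) (liouvilleCoeff N))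
        ≤ ((10 : ℝ) ^ (2 * N.factorial))⁻¹ * Real.sqrt (2 * π ^ 2) * 2) ∧
    ∀ c > (0 : ℝ), ¬ (∀ a : ℤ × ℤ → ℂ, IsH1 a → a 0 = 0 →
      Real.sqrt (gradSq' a) * Real.sqrt (dirSq' (1, liouville) a)
        ≥ c * normSq' a) := by
  refine ⟨fun N hN =>
    ⟨normSq'_liouvilleCoeff N, sqrt_gradSq'_liouvilleCoeff_le N, ?_, ?_⟩, ?_⟩
  · rw [sqrt_dirSq'_liouvilleCoeff, tsum_pow_factorial_mul_inv_eq]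
  · exact (sqrt_dirSq'_liouvilleCoeff_lt hN).le.trans
      (le_mul_of_one_le_right (by positivity) one_le_two)
  · intro c hc h
    obtain ⟨N, hN, hlarge⟩ := ((eventually_ge_atTop 3).and <|
      tendsto_ten_pow_factorial.eventually_gt_atTop
        (6 * √(2 * π ^ 2) / (c * (2 * π ^ 2)))).exists
    have hge := h _ (isH1_liouvilleCoeff N) (liouvilleCoeff_zero N)
    rw [normSq'_liouvilleCoeff] at hge
    exact lt_asymm (hge.trans_lt (sqrt_gradSq'_mul_sqrt_dirSq'_liouvilleCoeff_lt hN))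
      ((div_lt_comm₀ (by positivity) (by positivity)).mp hlarge)
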